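/- The 'accepts everything' problem is Π₂-hard in the following concrete sense: there is a total computable function r such that for every code e, dom(eval (r e)) = ℕ if and only if dom(eval e) is infinite. -/

import Mathlib

/-!
The code `r e` dovetails all computations of `e`: at stage `k` it runs `e` for `k` steps on
every input below `k`, and on input `n` it halts at the first stage by which more than `n`
inputs of `e` are seen to halt. So `r e` halts on every `n` iff the domain of `e` has more than
`n` elements for every `n`, i.e. is infinite; and `r` is computable by a uniform s-m-n argument.
-/

open Nat.Partrec (Code)

theorem Set.infinite_iff_forall_exists_lt_card {α ι : Type*} [Nonempty ι] {s : Set α}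
    {F : ι → Finset α} (hF : Directed (· ⊆ ·) F) (hs : s = ⋃ i, (F i : Set α)) :
    s.Infinite ↔ ∀ n, ∃ i, n < (F i).card := by
  constructor
  · intro hinf n
    obtain ⟨t, hts, htcard⟩ := hinf.exists_subset_card_eq (n + 1)
    have hdir : Directed (· ⊆ ·) fun i => (F i : Set α) :=
      hF.mono_comp _ fun _ _ => Finset.coe_subset.2
    obtain ⟨i, hti⟩ := hdir.exists_mem_subset_of_finset_subset_biUnion (hs ▸ hts)
    have := Finset.card_le_card (Finset.coe_subset.1 hti)
    exact ⟨i, by omega⟩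
  · intro hbig hfin
    obtain ⟨i, hi⟩ := hbig hfin.toFinset.card
    have hFi : F i ⊆ hfin.toFinset := fun x hx => by
      rw [Set.Finite.mem_toFinset, hs]; exact Set.mem_iUnion.2 ⟨i, hx⟩
    exact (Finset.card_le_card hFi).not_gt hi

namespace Nat.Partrec.Code

theorem exists_computable_eval_eq {α : Type*} [Primcodable α] {f : α → ℕ →. ℕ}
    (hf : Partrec₂ f) : ∃ r : α → Code, Computable r ∧ ∀ a, (r a).eval = f a := by
  have hf' : Partrec fun x : ℕ =>
      (Part.ofOption (Encodable.decode (α := α) x.unpair.1)).bind fun a => f a x.unpair.2 :=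
    (Computable.ofOption (Computable.decode.comp (Computable.fst.comp Computable.unpair))).bind
      (hf.comp Computable.snd (Computable.snd.comp (Computable.unpair.comp Computable.fst)))
  obtain ⟨c, hc⟩ := exists_code.1 (Partrec.nat_iff.1 hf')
  refine ⟨fun a => curry c (Encodable.encode a),
    primrec₂_curry.to_comp.comp (Computable.const c) Computable.encode, fun a => ?_⟩
  funext n
  simp [eval_curry, hc]

def haltsWithin (c : Code) (k : ℕ) : Finset ℕ :=
  {m ∈ Finset.range k | (c.evaln k m).isSome}

theorem mem_haltsWithin {c : Code} {k m : ℕ} :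
    m ∈ haltsWithin c k ↔ (c.evaln k m).isSome := by
  simp only [haltsWithin, Finset.mem_filter, Finset.mem_range, and_iff_right_iff_imp]
  intro h
  obtain ⟨x, hx⟩ := Option.isSome_iff_exists.1 h
  exact evaln_bound hx

theorem haltsWithin_mono (c : Code) : Monotone (haltsWithin c) := by
  intro k₁ k₂ hk m
  simp only [mem_haltsWithin, Option.isSome_iff_exists]
  exact fun ⟨x, hx⟩ => ⟨x, evaln_mono hk hx⟩

theorem dom_eval_eq_iUnion_haltsWithin (c : Code) :
    {n | (c.eval n).Dom} = ⋃ k, (haltsWithin c k : Set ℕ) := by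
  ext n
  simp only [Set.mem_ofPred_eq, Set.mem_iUnion, Finset.mem_coe, mem_haltsWithin,
    Part.dom_iff_mem, evaln_complete, Option.isSome_iff_exists, Option.mem_def]
  exact exists_comm

theorem primrec_card_haltsWithin : Primrec₂ fun c k => (haltsWithin c k).card := by
  have hhalts : PrimrecRel fun (m : ℕ) (p : Code × ℕ) => (p.1.evaln p.2 m).isSome :=
    (Primrec.option_isSome.comp (primrec_evaln.comp
      ((Primrec.snd.comp Primrec.snd).pair
        (Primrec.fst.comp Primrec.snd) |>.pair Primrec.fst))).of_eq
          (fun _ => Bool.decide_eq_true.symm) |>.primrecPred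
  exact (Primrec.list_length.comp (hhalts.listFilter.comp
    (Primrec.list_range.comp Primrec.snd) .id)).to₂.of_eq
      fun _ _ => rfl

def dovetail (c : Code) (n : ℕ) : Part ℕ :=
  Nat.rfind (fun k => decide (n < (haltsWithin c k).card) : ℕ → Bool)

theorem dovetail_dom {c : Code} {n : ℕ} :
    (dovetail c n).Dom ↔ ∃ k, n < (haltsWithin c k).card := by
  simp [dovetail]

theorem partrec₂_dovetail : Partrec₂ dovetail :=
  _root_.Partrec.rfind ((Primrec.nat_lt.decide.comp (Primrec.snd.comp Primrec.fst)
    (primrec_card_haltsWithin.comp (Primrec.fst.comp Primrec.fst)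
      Primrec.snd)).to_comp.partrec.to₂)

end Nat.Partrec.Code

/-- Π₂-hardness of 'accepts everything': a total computable `r` with
`dom(eval (r e)) = ℕ` iff `dom(eval e)` is infinite. -/
theorem accepts_everything_pi2_hard :
    ∃ r : Code → Code, Computable r ∧
      ∀ e : Code,
        {n | ((r e).eval n).Dom} = Set.univ ↔ {n | (e.eval n).Dom}.Infinite := by
  obtain ⟨r, hr, hr_eval⟩ := Code.exists_computable_eval_eq Code.partrec₂_dovetail
  refine ⟨r, hr, fun e => ?_⟩
  rw [Set.eq_univ_iff_forall, Set.infinite_iff_forall_exists_lt_card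
    (Code.haltsWithin_mono e).directed_le (Code.dom_eval_eq_iUnion_haltsWithin e)]
  simp only [Set.mem_ofPred_eq, hr_eval, Code.dovetail_dom]
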